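/- For any two density operators ρ_A, ρ_B on ℂ^d, there exists a coupling ρ_{AB} with Tr(P_s ρ_{AB}) ≥ (1 + F(ρ_A, ρ_B)²)/2. -/

import Mathlib

open scoped Matrix Kronecker ComplexOrder

noncomputable section

namespace QEMD

variable {m n : Type*} [Fintype m] [Fintype n] [DecidableEq m] [DecidableEq n]

/-- Total square root: the PSD square root if `A` is PSD, else `0`. -/
def msqrt (A : Matrix n n ℂ) : Matrix n n ℂ :=
  letI := Classical.dec A.PosSemidef
  if h : A.PosSemidef then
    (h.1.eigenvectorUnitary : Matrix n n ℂ) *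
      Matrix.diagonal ((↑) ∘ Real.sqrt ∘ h.1.eigenvalues) *
      (star h.1.eigenvectorUnitary : Matrix n n ℂ)
  else 0

/-- Trace norm `‖A‖₁ = Tr √(AᴴA)`. -/
def traceNorm (A : Matrix n n ℂ) : ℝ :=
  ((msqrt (Aᴴ * A)).trace).re

/-- Trace distance `D(ρ,σ) = ½‖ρ-σ‖₁`. -/
def traceDist (ρ σ : Matrix n n ℂ) : ℝ := traceNorm (ρ - σ) / 2

/-- Fidelity `F(ρ,σ) = Tr √(√ρ σ √ρ)`. -/
def fidelity (ρ σ : Matrix n n ℂ) : ℝ :=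
  ((msqrt (msqrt ρ * σ * msqrt ρ)).trace).re

/-- Density matrix predicate. -/
def IsDensity (ρ : Matrix n n ℂ) : Prop := ρ.PosSemidef ∧ ρ.trace = 1

/-- Projector `|v⟩⟨v|` onto a vector. -/
def proj (v : n → ℂ) : Matrix n n ℂ := Matrix.of fun i j => v i * star (v j)

/-- Partial trace over the first (left) factor. -/
def traceLeft (ρ : Matrix (m × n) (m × n) ℂ) : Matrix n n ℂ :=
  Matrix.of fun i j => ∑ k, ρ (k, i) (k, j)

/-- Partial trace over the second (right) factor. -/
def traceRight (ρ : Matrix (m × n) (m × n) ℂ) : Matrix m m ℂ :=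
  Matrix.of fun i j => ∑ k, ρ (i, k) (j, k)

/-- The swap operator `S|αβ⟩ = |βα⟩` on `ℂ^d ⊗ ℂ^d`. -/
def swap (d : ℕ) : Matrix (Fin d × Fin d) (Fin d × Fin d) ℂ :=
  Matrix.of fun p q => if p.1 = q.2 ∧ p.2 = q.1 then 1 else 0

/-- Projection onto the symmetric subspace, `P_s = (I + S)/2`. -/
def Psym (d : ℕ) : Matrix (Fin d × Fin d) (Fin d × Fin d) ℂ := (2:ℂ)⁻¹ • (1 + swap d)

/-- Projection onto the antisymmetric subspace, `P_as = (I - S)/2`. -/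
def Pasym (d : ℕ) : Matrix (Fin d × Fin d) (Fin d × Fin d) ℂ := (2:ℂ)⁻¹ • (1 - swap d)

/-- `ρAB` is a quantum coupling of `ρA` and `ρB`. -/
def IsCoupling (ρAB : Matrix (m × n) (m × n) ℂ) (ρA : Matrix m m ℂ)
    (ρB : Matrix n n ℂ) : Prop :=
  IsDensity ρAB ∧ traceRight ρAB = ρA ∧ traceLeft ρAB = ρB

/-- The maximally entangled vector `|Φ⟩ = (1/√d) ∑ᵢ |i⟩|i⟩`. -/
def maxEnt (d : ℕ) : Fin d × Fin d → ℂ :=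
  fun p => if p.1 = p.2 then ((1 / Real.sqrt d : ℝ) : ℂ) else 0

end QEMD

/-!
Write `ρ_A = G Gᴴ` and `ρ_B = H Hᴴ` with columns `g_k`, `h_k` of equal norms and
`∑ₖ ⟨g_k, h_k⟩ = F(ρ_A, ρ_B)`: take `G = √ρ_A W` and `H = √ρ_B V W`, where the unitary `V`
comes from the polar decomposition of `√ρ_B √ρ_A`, so that `√ρ_A √ρ_B V = √(√ρ_A ρ_B √ρ_A)`,
and the co-isometry `W` (eigenvectors of the traceless matrix `ρ_A - Vᴴ ρ_B V` followed by a
normalized character table) makes the diagonal of `Wᴴ (ρ_A - Vᴴ ρ_B V) W` vanish.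
The separable state `ρ_AB = ∑ₖ ‖g_k‖⁻² |g_k⟩⟨g_k| ⊗ |h_k⟩⟨h_k|` then has marginals `ρ_A`, `ρ_B`,
and `Tr(S ρ_AB) = ∑ₖ |⟨g_k, h_k⟩|² / ‖g_k‖² ≥ F²` by Cauchy–Schwarz, as `∑ₖ ‖g_k‖² = 1`.
Finally `Tr(P_s ρ_AB) = (1 + Tr(S ρ_AB)) / 2`.
-/

section PolarDecomposition

variable {E : Type*} [NormedAddCommGroup E] [InnerProductSpace ℂ E] [FiniteDimensional ℂ E]

theorem ContinuousLinearMap.exists_mem_unitary_mul_eq_of_star_mul_self_eq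
    {A T : E →L[ℂ] E} (h : star A * A = star T * T) :
    ∃ U ∈ unitary (E →L[ℂ] E), U * A = T := by
  have hnorm : ∀ v, ‖T v‖ = ‖A v‖ := fun v => by
    simp only [ContinuousLinearMap.apply_norm_eq_sqrt_inner_adjoint_left,
      ← ContinuousLinearMap.star_eq_adjoint, ← ContinuousLinearMap.mul_def, h]
  have hker : LinearMap.ker (A : E →ₗ[ℂ] E) ≤ LinearMap.ker (T : E →ₗ[ℂ] E) := fun v hv => by
    simpa [← norm_eq_zero, hnorm] using hv
  -- `A v ↦ T v` is a well-defined isometry on the range of `A`; extend it to all of `E`.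
  let L : LinearMap.range (A : E →ₗ[ℂ] E) →ₗ[ℂ] E :=
    (LinearMap.ker (A : E →ₗ[ℂ] E)).liftQ T hker ∘ₗ
      (A : E →ₗ[ℂ] E).quotKerEquivRange.symm.toLinearMap
  have hL : ∀ v, L ⟨A v, LinearMap.mem_range_self _ v⟩ = T v := fun v => by
    simp only [L, LinearMap.comp_apply, LinearEquiv.coe_coe]
    erw [LinearMap.quotKerEquivRange_symm_apply_image]
    rfl
  let L' : LinearMap.range (A : E →ₗ[ℂ] E) →ₗᵢ[ℂ] E :=
    ⟨L, by rintro ⟨_, v, rfl⟩; simpa [hL] using hnorm v⟩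
  let U := Unitary.linearIsometryEquiv.symm (L'.extend.toLinearIsometryEquiv rfl)
  refine ⟨U, U.2, ContinuousLinearMap.ext fun v => ?_⟩
  have := L'.extend_apply ⟨A v, LinearMap.mem_range_self _ v⟩
  simpa [U, L'] using this.trans (hL v)

end PolarDecomposition

theorem Matrix.exists_mem_unitary_mul_eq_of_conjTranspose_mul_self_eq {n : Type*} [Fintype n]
    [DecidableEq n] {A X : Matrix n n ℂ} (h : Aᴴ * A = Xᴴ * X) :
    ∃ V ∈ unitary (Matrix n n ℂ), V * A = X := by
  let Φ := Matrix.toEuclideanCLM (n := n) (𝕜 := ℂ)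
  obtain ⟨U, hU, hUA⟩ := ContinuousLinearMap.exists_mem_unitary_mul_eq_of_star_mul_self_eq
    (A := Φ A) (T := Φ X) (by simp only [← map_star, ← map_mul, Matrix.star_eq_conjTranspose, h])
  refine ⟨Φ.symm U, Unitary.map_mem Φ.symm hU, ?_⟩
  rw [← Φ.symm_apply_apply X, ← hUA, map_mul, Φ.symm_apply_apply]

namespace QEMD

open Matrix

variable {m n ι : Type*}

section FlatCoisometry

variable [DecidableEq n] {α : Type*} [AddCommGroup α] [Fintype α] [DecidableEq α]

lemma exists_flat_coisometry (e : n ↪ α) :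
    ∃ F : Matrix n (AddChar α ℂ) ℂ,
      F * Fᴴ = 1 ∧ ∀ j ψ, star (F j ψ) * F j ψ = (Fintype.card α : ℂ)⁻¹ := by
  let c : ℂ := (((Real.sqrt (Fintype.card α))⁻¹ : ℝ) : ℂ)
  have hc : c * star c = (Fintype.card α : ℂ)⁻¹ := by
    simp only [c, Complex.star_def, Complex.conj_ofReal, ← Complex.ofReal_mul, ← mul_inv,
      Real.mul_self_sqrt (Nat.cast_nonneg _)]
    push_cast
    rfl
  refine ⟨Matrix.of fun j ψ => c * ψ (e j), ?_, fun j ψ => ?_⟩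
  · ext j j'
    have hψ : ∀ ψ : AddChar α ℂ,
        c * ψ (e j) * star (c * ψ (e j')) = c * star c * ψ (e j - e j') := by
      intro ψ
      simp only [star_mul', Complex.star_def, sub_eq_add_neg, AddChar.map_add_eq_mul,
        AddChar.map_neg_eq_conj]
      ring
    simp only [Matrix.mul_apply, Matrix.conjTranspose_apply, Matrix.of_apply, hψ,
      ← Finset.mul_sum, AddChar.sum_apply_eq_ite, sub_eq_zero, e.injective.eq_iff, hc,
      Matrix.one_apply]
    split_ifs <;> simp
  · rw [Matrix.of_apply, star_mul', mul_mul_mul_comm, mul_comm (star c), hc, Complex.star_def,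
      Complex.conj_mul', AddChar.norm_apply]
    simp

lemma exists_coisometry_diag_conjTranspose_mul_mul_eq_zero [Fintype n] (e : n ↪ α)
    {D : Matrix n n ℂ} (hD : D.IsHermitian) (htr : D.trace = 0) :
    ∃ W : Matrix n (AddChar α ℂ) ℂ, W * Wᴴ = 1 ∧ ∀ ψ, (Wᴴ * D * W) ψ ψ = 0 := by
  obtain ⟨F, hF, hFabs⟩ := exists_flat_coisometry e
  let U : Matrix n n ℂ := hD.eigenvectorUnitary
  have hU : U * star U = 1 := Matrix.mem_unitaryGroup_iff.mp hD.eigenvectorUnitary.2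
  have hU' : star U * U = 1 := Matrix.mem_unitaryGroup_iff'.mp hD.eigenvectorUnitary.2
  set Λ : Matrix n n ℂ := Matrix.diagonal (RCLike.ofReal ∘ hD.eigenvalues)
  have hΛ : star U * D * U = Λ := by
    rw [hD.spectral_theorem, Unitary.conjStarAlgAut_apply]
    simp only [U] at hU' ⊢
    rw [← Matrix.mul_assoc, ← Matrix.mul_assoc, hU', Matrix.one_mul, Matrix.mul_assoc, hU',
      Matrix.mul_one]
  have hΛtr : Λ.trace = 0 := by rw [← hΛ, Matrix.trace_mul_cycle, hU, Matrix.one_mul, htr]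
  refine ⟨U * F, ?_, fun ψ => ?_⟩
  · rw [Matrix.conjTranspose_mul, Matrix.mul_assoc, ← Matrix.mul_assoc F, hF, Matrix.one_mul,
      ← Matrix.star_eq_conjTranspose, hU]
  · have : (U * F)ᴴ * D * (U * F) = Fᴴ * Λ * F := by
      rw [← hΛ, Matrix.conjTranspose_mul]
      simp only [Matrix.star_eq_conjTranspose, Matrix.mul_assoc]
    rw [this, Matrix.mul_apply]
    simp only [Matrix.mul_diagonal, Matrix.conjTranspose_apply, Λ]
    calc ∑ j, star (F j ψ) * (RCLike.ofReal ∘ hD.eigenvalues) j * F j ψ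
        = (Fintype.card α : ℂ)⁻¹ * Λ.trace := by
          simp only [Matrix.trace, Λ, Finset.mul_sum]
          exact Finset.sum_congr rfl fun j _ => by rw [← hFabs j ψ]; simp; ring
      _ = 0 := by rw [hΛtr, mul_zero]

end FlatCoisometry

section Fidelity

open scoped MatrixOrder

variable [Fintype n] [DecidableEq n]

lemma msqrt_eq_cfcSqrt {A : Matrix n n ℂ} (hA : A.PosSemidef) : msqrt A = CFC.sqrt A := by
  rw [msqrt, dif_pos hA, CFC.sqrt_eq_cfc, cfc_nnreal_eq_real _ A hA.nonneg, hA.1.cfc_eq,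
    IsHermitian.cfc, Unitary.conjStarAlgAut_apply]
  congr 3
  funext i
  simp [Real.coe_sqrt, Real.coe_toNNReal', max_eq_left (hA.eigenvalues_nonneg i)]

lemma posSemidef_cfcSqrt_mul_mul_cfcSqrt {ρ σ : Matrix n n ℂ} (hσ : σ.PosSemidef) :
    (CFC.sqrt ρ * σ * CFC.sqrt ρ).PosSemidef := by
  simpa [(CFC.sqrt_nonneg ρ).isSelfAdjoint.star_eq, ← star_eq_conjTranspose] using
    hσ.conjTranspose_mul_mul_same (CFC.sqrt ρ)

lemma fidelity_eq_re_trace_cfcSqrt {ρ σ : Matrix n n ℂ} (hρ : ρ.PosSemidef) (hσ : σ.PosSemidef) :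
    fidelity ρ σ = (CFC.sqrt (CFC.sqrt ρ * σ * CFC.sqrt ρ)).trace.re := by
  rw [fidelity, msqrt_eq_cfcSqrt hρ, msqrt_eq_cfcSqrt (posSemidef_cfcSqrt_mul_mul_cfcSqrt hσ)]

lemma exists_mem_unitary_cfcSqrt_mul_cfcSqrt_mul_eq {ρ σ : Matrix n n ℂ} (hσ : σ.PosSemidef) :
    ∃ V ∈ unitary (Matrix n n ℂ),
      CFC.sqrt ρ * CFC.sqrt σ * V = CFC.sqrt (CFC.sqrt ρ * σ * CFC.sqrt ρ) := by
  set N := CFC.sqrt (CFC.sqrt ρ * σ * CFC.sqrt ρ)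
  have hN : Nᴴ = N := (CFC.sqrt_nonneg _).isSelfAdjoint.star_eq
  have hsρ : (CFC.sqrt ρ)ᴴ = CFC.sqrt ρ := (CFC.sqrt_nonneg ρ).isSelfAdjoint.star_eq
  have hsσ : (CFC.sqrt σ)ᴴ = CFC.sqrt σ := (CFC.sqrt_nonneg σ).isSelfAdjoint.star_eq
  obtain ⟨V, hV, hVN⟩ := Matrix.exists_mem_unitary_mul_eq_of_conjTranspose_mul_self_eq
    (A := N) (X := CFC.sqrt σ * CFC.sqrt ρ) (by
      rw [hN, CFC.sqrt_mul_sqrt_self _ (posSemidef_cfcSqrt_mul_mul_cfcSqrt hσ).nonneg,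
        conjTranspose_mul, hsρ, hsσ]
      simp only [Matrix.mul_assoc]
      rw [← Matrix.mul_assoc (CFC.sqrt σ), CFC.sqrt_mul_sqrt_self _ hσ.nonneg])
  refine ⟨V, hV, ?_⟩
  have : CFC.sqrt ρ * CFC.sqrt σ = N * Vᴴ := by
    rw [← hsρ, ← hsσ, ← conjTranspose_mul, ← hVN, conjTranspose_mul, hN]
  rw [this, Matrix.mul_assoc, ← star_eq_conjTranspose, Unitary.star_mul_self_of_mem hV,
    Matrix.mul_one]

theorem exists_factors_with_equal_column_norms {ρ σ : Matrix n n ℂ}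
    (hρ : ρ.PosSemidef) (hσ : σ.PosSemidef) (htr : ρ.trace = σ.trace) :
    ∃ (ι : Type) (_ : Fintype ι) (G H : Matrix n ι ℂ),
      G * Gᴴ = ρ ∧ H * Hᴴ = σ ∧ (∀ k, (Gᴴ * G) k k = (Hᴴ * H) k k) ∧
        (Gᴴ * H).trace = (CFC.sqrt (CFC.sqrt ρ * σ * CFC.sqrt ρ)).trace := by
  obtain ⟨V, hV, hVN⟩ := exists_mem_unitary_cfcSqrt_mul_cfcSqrt_mul_eq (ρ := ρ) hσ
  have hVV : V * Vᴴ = 1 := Unitary.mul_star_self_of_mem hV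
  have hsρ : (CFC.sqrt ρ)ᴴ = CFC.sqrt ρ := (CFC.sqrt_nonneg ρ).isSelfAdjoint.star_eq
  have hsσ : (CFC.sqrt σ)ᴴ = CFC.sqrt σ := (CFC.sqrt_nonneg σ).isSelfAdjoint.star_eq
  have hρ2 : CFC.sqrt ρ * CFC.sqrt ρ = ρ := CFC.sqrt_mul_sqrt_self ρ hρ.nonneg
  have hσ2 : CFC.sqrt σ * CFC.sqrt σ = σ := CFC.sqrt_mul_sqrt_self σ hσ.nonneg
  set D := ρ - Vᴴ * σ * V
  have hD : D.IsHermitian := hρ.1.sub (isHermitian_conjTranspose_mul_mul V hσ.1)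
  have hDtr : D.trace = 0 := by
    rw [trace_sub, trace_mul_cycle, hVV, Matrix.one_mul, htr, sub_self]
  -- Any finite abelian group containing a copy of `n` will do; `Fin (card n + 1)` is one even
  -- when `n` is empty.
  obtain ⟨W, hW, hWD⟩ := exists_coisometry_diag_conjTranspose_mul_mul_eq_zero
    ((Fintype.equivFin n).toEmbedding.trans Fin.castSuccEmb) hD hDtr
  have hGG : (CFC.sqrt ρ * W)ᴴ * (CFC.sqrt ρ * W) = Wᴴ * ρ * W := by
    simp only [conjTranspose_mul, hsρ, Matrix.mul_assoc]
    rw [← Matrix.mul_assoc (CFC.sqrt ρ), hρ2]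
  have hHH : (CFC.sqrt σ * V * W)ᴴ * (CFC.sqrt σ * V * W) = Wᴴ * (Vᴴ * σ * V) * W := by
    simp only [conjTranspose_mul, hsσ, Matrix.mul_assoc]
    rw [← Matrix.mul_assoc (CFC.sqrt σ) (CFC.sqrt σ), hσ2]
  have hGH : (CFC.sqrt ρ * W)ᴴ * (CFC.sqrt σ * V * W) =
      Wᴴ * CFC.sqrt (CFC.sqrt ρ * σ * CFC.sqrt ρ) * W := by
    rw [← hVN]
    simp only [conjTranspose_mul, hsρ, Matrix.mul_assoc]
  refine ⟨_, inferInstance, CFC.sqrt ρ * W, CFC.sqrt σ * V * W, ?_, ?_, fun k => ?_, ?_⟩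
  · rw [conjTranspose_mul, hsρ, Matrix.mul_assoc, ← Matrix.mul_assoc W, hW, Matrix.one_mul, hρ2]
  · simp only [conjTranspose_mul, hsσ, Matrix.mul_assoc]
    rw [← Matrix.mul_assoc W, hW, Matrix.one_mul, ← Matrix.mul_assoc V, hVV, Matrix.one_mul, hσ2]
  · rw [← sub_eq_zero, ← Matrix.sub_apply, hGG, hHH, ← Matrix.sub_mul, ← Matrix.mul_sub, hWD]
  · rw [hGH, trace_mul_cycle, hW, Matrix.one_mul]

end Fidelity


lemma posSemidef_proj [Fintype n] (v : n → ℂ) : (proj v).PosSemidef :=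
  posSemidef_vecMulVec_self_star v

lemma trace_proj [Fintype n] (v : n → ℂ) : (proj v).trace = star v ⬝ᵥ v := by
  simp [proj, Matrix.trace, dotProduct, mul_comm]

lemma trace_proj_mul_proj [Fintype n] (u v : n → ℂ) :
    (proj u * proj v).trace = (star u ⬝ᵥ v) * star (star u ⬝ᵥ v) := by
  simp [proj, Matrix.trace, Matrix.mul_apply, dotProduct, Finset.sum_mul_sum]
  rw [Finset.sum_comm]
  exact Finset.sum_congr rfl fun _ _ => Finset.sum_congr rfl fun _ _ => by ring

lemma conjTranspose_mul_apply_eq_dotProduct [Fintype m] (G H : Matrix m ι ℂ) (k l : ι) :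
    (Gᴴ * H) k l = star (Gᵀ k) ⬝ᵥ Hᵀ l := rfl

lemma sum_proj_transpose [Fintype ι] (G : Matrix m ι ℂ) : ∑ k, proj (Gᵀ k) = G * Gᴴ := by
  ext i j
  simp [proj, Matrix.sum_apply, Matrix.mul_apply]

lemma inv_mul_self_smul_proj [Fintype n] (v : n → ℂ) :
    ((star v ⬝ᵥ v)⁻¹ * (star v ⬝ᵥ v)) • proj v = proj v := by
  by_cases hv : v = 0
  · ext
    simp [hv, proj]
  · rw [inv_mul_cancel₀ (dotProduct_star_self_eq_zero.not.mpr hv), one_smul]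

lemma traceRight_kronecker [Fintype n] (A : Matrix m m ℂ) (B : Matrix n n ℂ) :
    traceRight (A ⊗ₖ B) = B.trace • A := by
  ext i j
  simp [traceRight, Matrix.trace, ← Finset.mul_sum, mul_comm]

lemma traceLeft_kronecker [Fintype m] (A : Matrix m m ℂ) (B : Matrix n n ℂ) :
    traceLeft (A ⊗ₖ B) = A.trace • B := by
  ext i j
  simp [traceLeft, Matrix.trace, Finset.sum_mul]

lemma traceRight_sum_smul [Fintype n] [Fintype ι] (c : ι → ℂ)
    (ρ : ι → Matrix (m × n) (m × n) ℂ) :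
    traceRight (∑ k, c k • ρ k) = ∑ k, c k • traceRight (ρ k) := by
  ext i j
  simp only [traceRight, Matrix.sum_apply, Matrix.smul_apply, Matrix.of_apply, smul_eq_mul,
    Finset.mul_sum]
  exact Finset.sum_comm

lemma traceLeft_sum_smul [Fintype m] [Fintype ι] (c : ι → ℂ)
    (ρ : ι → Matrix (m × n) (m × n) ℂ) :
    traceLeft (∑ k, c k • ρ k) = ∑ k, c k • traceLeft (ρ k) := by
  ext i j
  simp only [traceLeft, Matrix.sum_apply, Matrix.smul_apply, Matrix.of_apply, smul_eq_mul,
    Finset.mul_sum]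
  exact Finset.sum_comm

lemma trace_traceRight [Fintype m] [Fintype n] (ρ : Matrix (m × n) (m × n) ℂ) :
    (traceRight ρ).trace = ρ.trace := by
  simp [traceRight, Matrix.trace, Fintype.sum_prod_type]

lemma trace_swap_mul_kronecker {d : ℕ} (A B : Matrix (Fin d) (Fin d) ℂ) :
    (swap d * (A ⊗ₖ B)).trace = (A * B).trace := by
  simp [swap, Matrix.trace, Matrix.mul_apply, Fintype.sum_prod_type, ite_and]
  exact Finset.sum_comm

lemma re_trace_Psym_mul {d : ℕ} (ρ : Matrix (Fin d × Fin d) (Fin d × Fin d) ℂ) :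
    (Psym d * ρ).trace.re = (ρ.trace.re + (swap d * ρ).trace.re) / 2 := by
  rw [Psym, Matrix.smul_mul, Matrix.add_mul, Matrix.one_mul, Matrix.trace_smul, Matrix.trace_add,
    smul_eq_mul, inv_mul_eq_div]
  simp

section ProductCoupling

variable [Fintype m] [Fintype n] [Fintype ι]

def productCoupling (G : Matrix m ι ℂ) (H : Matrix n ι ℂ) : Matrix (m × n) (m × n) ℂ :=
  ∑ k, ((Gᴴ * G) k k)⁻¹ • (proj (Gᵀ k) ⊗ₖ proj (Hᵀ k))

variable {G : Matrix m ι ℂ} {H : Matrix n ι ℂ}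

lemma posSemidef_productCoupling : (productCoupling G H).PosSemidef :=
  posSemidef_sum _ fun _ _ => ((posSemidef_proj _).kronecker (posSemidef_proj _)).smul
    (inv_nonneg_of_nonneg (posSemidef_conjTranspose_mul_self G).diag_nonneg)

lemma traceRight_productCoupling (hGH : ∀ k, (Gᴴ * G) k k = (Hᴴ * H) k k) :
    traceRight (productCoupling G H) = G * Gᴴ := by
  simp only [productCoupling, traceRight_sum_smul, traceRight_kronecker, trace_proj, smul_smul,
    ← conjTranspose_mul_apply_eq_dotProduct, ← hGH, ← sum_proj_transpose]
  exact Finset.sum_congr rfl fun _ _ => inv_mul_self_smul_proj _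

lemma traceLeft_productCoupling (hGH : ∀ k, (Gᴴ * G) k k = (Hᴴ * H) k k) :
    traceLeft (productCoupling G H) = H * Hᴴ := by
  simp only [productCoupling, traceLeft_sum_smul, traceLeft_kronecker, trace_proj, smul_smul,
    ← conjTranspose_mul_apply_eq_dotProduct, hGH, ← sum_proj_transpose]
  exact Finset.sum_congr rfl fun _ _ => inv_mul_self_smul_proj _

end ProductCoupling

lemma trace_swap_mul_productCoupling {d : ℕ} [Fintype ι] (G H : Matrix (Fin d) ι ℂ) :
    (swap d * productCoupling G H).trace =
      ∑ k, ((Gᴴ * G) k k)⁻¹ * ((Gᴴ * H) k k * star ((Gᴴ * H) k k)) := by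
  simp only [productCoupling, Matrix.mul_sum, Matrix.mul_smul, Matrix.trace_sum,
    Matrix.trace_smul, trace_swap_mul_kronecker, trace_proj_mul_proj, smul_eq_mul,
    conjTranspose_mul_apply_eq_dotProduct]

theorem sq_re_sum_le_sum_mul_sum_norm_sq_div [Fintype ι] (t : ι → ℂ) {r : ι → ℝ}
    (hr : ∀ k, 0 ≤ r k) (ht : ∀ k, r k = 0 → t k = 0) :
    (∑ k, t k).re ^ 2 ≤ (∑ k, r k) * ∑ k, ‖t k‖ ^ 2 / r k := by
  calc (∑ k, t k).re ^ 2 ≤ (∑ k, ‖t k‖) ^ 2 := by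
        rw [← sq_abs]
        gcongr
        exact (Complex.abs_re_le_norm _).trans (norm_sum_le _ _)
    _ ≤ _ := by
      refine Finset.sum_sq_le_sum_mul_sum_of_sq_le_mul _ (fun k _ => hr k)
        (fun k _ => div_nonneg (sq_nonneg _) (hr k)) fun k _ => ?_
      rcases (hr k).eq_or_lt with h | h
      · simp [ht k h.symm, ← h]
      · rw [mul_div_cancel₀ _ h.ne']

theorem sq_re_trace_le_re_trace_swap_mul_productCoupling {d : ℕ} [Fintype ι]
    (G H : Matrix (Fin d) ι ℂ) :
    (Gᴴ * H).trace.re ^ 2 ≤ (Gᴴ * G).trace.re * (swap d * productCoupling G H).trace.re := by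
  set r : ι → ℝ := fun k => ((Gᴴ * G) k k).re
  have hr : ∀ k, ((r k : ℝ) : ℂ) = (Gᴴ * G) k k :=
    (isHermitian_conjTranspose_mul_self G).coe_re_apply_self
  have hr0 : ∀ k, 0 ≤ r k := fun k =>
    (Complex.nonneg_iff.mp (posSemidef_conjTranspose_mul_self G).diag_nonneg).1
  have ht : ∀ k, r k = 0 → (Gᴴ * H) k k = 0 := fun k hk => by
    have : Gᵀ k = 0 := by
      rw [← dotProduct_star_self_eq_zero, ← conjTranspose_mul_apply_eq_dotProduct, ← hr, hk,
        Complex.ofReal_zero]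
    rw [conjTranspose_mul_apply_eq_dotProduct, this, star_zero, zero_dotProduct]
  have hswap : (swap d * productCoupling G H).trace.re = ∑ k, ‖(Gᴴ * H) k k‖ ^ 2 / r k := by
    simp only [trace_swap_mul_productCoupling, ← hr, Complex.star_def, Complex.mul_conj',
      ← Complex.ofReal_pow, ← Complex.ofReal_inv, ← Complex.ofReal_mul, ← Complex.ofReal_sum,
      Complex.ofReal_re, div_eq_inv_mul]
  have htr : (Gᴴ * G).trace.re = ∑ k, r k := by simp [Matrix.trace, r]
  rw [hswap, htr]
  exact sq_re_sum_le_sum_mul_sum_norm_sq_div _ hr0 ht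

theorem stmt11 (d : ℕ) (ρA ρB : Matrix (Fin d) (Fin d) ℂ)
    (hA : IsDensity ρA) (hB : IsDensity ρB) :
    ∃ ρAB : Matrix ((Fin d) × (Fin d)) ((Fin d) × (Fin d)) ℂ,
      IsCoupling ρAB ρA ρB ∧
      ((Psym d * ρAB).trace).re ≥ (1 + fidelity ρA ρB ^ 2) / 2 := by
  obtain ⟨ι, _, G, H, hG, hH, hGH, hF⟩ :=
    exists_factors_with_equal_column_norms hA.1 hB.1 (hA.2.trans hB.2.symm)
  have hρA : traceRight (productCoupling G H) = ρA := (traceRight_productCoupling hGH).trans hG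
  have hρB : traceLeft (productCoupling G H) = ρB := (traceLeft_productCoupling hGH).trans hH
  have htr : (productCoupling G H).trace = 1 := by rw [← trace_traceRight, hρA, hA.2]
  have hGG : (Gᴴ * G).trace.re = 1 := by rw [trace_mul_comm, hG, hA.2, Complex.one_re]
  have hfid : fidelity ρA ρB = (Gᴴ * H).trace.re := by
    rw [fidelity_eq_re_trace_cfcSqrt hA.1 hB.1, hF]
  have key := sq_re_trace_le_re_trace_swap_mul_productCoupling G H
  rw [hGG, one_mul] at key
  refine ⟨productCoupling G H, ⟨⟨posSemidef_productCoupling, htr⟩, hρA, hρB⟩, ?_⟩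
  rw [re_trace_Psym_mul, htr, Complex.one_re, hfid]
  linarith
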